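/- Characterization of realizable separator sequences: a sequence σ_0, …, σ_n of subsets of {S,E,C} is the separator sequence of some set of mentions if and only if it satisfies all of the following local conditions: σ_0 ⊆ {S}; σ_n ⊆ {E}; for every k with C ∈ σ_k: S ∈ σ_{k-1} or C ∈ σ_{k-1}, and E ∈ σ_{k+1} or C ∈ σ_{k+1}; for every k with E ∈ σ_k: S ∈ σ_{k-1} or C ∈ σ_{k-1}; for every k with S ∈ σ_k: E ∈ σ_{k+1} or C ∈ σ_{k+1}. -/

import Mathlib

inductive Marker | S | E | C
deriving DecidableEq

/-- Separator sequence of a set of mentions (intervals). Gap `k` lies between word `k` and word `k+1`. -/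
def sep (M : Set (ℕ × ℕ)) (k : ℕ) : Set Marker :=
  {m | (m = Marker.S ∧ ∃ p ∈ M, p.1 = k + 1) ∨
       (m = Marker.E ∧ ∃ p ∈ M, p.2 = k) ∨
       (m = Marker.C ∧ ∃ p ∈ M, p.1 ≤ k ∧ k + 1 ≤ p.2)}

/-- `M` is a set of mentions over a sentence of `n` words. -/
def Valid (n : ℕ) (M : Set (ℕ × ℕ)) : Prop :=
  ∀ p ∈ M, 1 ≤ p.1 ∧ p.1 ≤ p.2 ∧ p.2 ≤ n

/-!
Every marker of a separator sequence is witnessed by a mention, and the same mention witnesses the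
marker (S or C, resp. E or C) that the local conditions demand at the neighbouring gap. Conversely,
call a gap interval canonical when it starts at a gap carrying S, ends at a gap carrying E and every
gap strictly inside carries C. The local conditions let one walk from any marker leftwards along
C's to an S and rightwards along C's to an E, so every marker lies on a canonical interval; and a
canonical interval produces no marker that is not already there. Hence the set of all canonical
intervals realizes the sequence.
-/

open Marker Set

@[simp]
lemma S_mem_sep_iff {M : Set (ℕ × ℕ)} {k : ℕ} : S ∈ sep M k ↔ ∃ p ∈ M, p.1 = k + 1 := by
  simp [sep]

@[simp]
lemma E_mem_sep_iff {M : Set (ℕ × ℕ)} {k : ℕ} : E ∈ sep M k ↔ ∃ p ∈ M, p.2 = k := by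
  simp [sep]

@[simp]
lemma C_mem_sep_iff {M : Set (ℕ × ℕ)} {k : ℕ} :
    C ∈ sep M k ↔ ∃ p ∈ M, p.1 ≤ k ∧ k + 1 ≤ p.2 := by
  simp [sep]

lemma S_mem_sep_or_C_mem_sep {M : Set (ℕ × ℕ)} {p : ℕ × ℕ} {k : ℕ} (hp : p ∈ M)
    (h₁ : p.1 ≤ k + 1) (h₂ : k + 1 ≤ p.2) : S ∈ sep M k ∨ C ∈ sep M k := by
  rcases h₁.eq_or_lt with h | h
  · exact .inl (S_mem_sep_iff.2 ⟨p, hp, h⟩)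
  · exact .inr (C_mem_sep_iff.2 ⟨p, hp, by omega, h₂⟩)

lemma E_mem_sep_or_C_mem_sep {M : Set (ℕ × ℕ)} {p : ℕ × ℕ} {k : ℕ} (hp : p ∈ M)
    (h₁ : p.1 ≤ k) (h₂ : k ≤ p.2) : E ∈ sep M k ∨ C ∈ sep M k := by
  rcases h₂.eq_or_lt with h | h
  · exact .inl (E_mem_sep_iff.2 ⟨p, hp, h.symm⟩)
  · exact .inr (C_mem_sep_iff.2 ⟨p, hp, h₁, h⟩)

structure LocalConditions (n : ℕ) (σ : ℕ → Set Marker) : Prop where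
  zero_subset : σ 0 ⊆ {S}
  last_subset : σ n ⊆ {E}
  C_left : ∀ k ≤ n, C ∈ σ k → S ∈ σ (k - 1) ∨ C ∈ σ (k - 1)
  C_right : ∀ k ≤ n, C ∈ σ k → E ∈ σ (k + 1) ∨ C ∈ σ (k + 1)
  E_left : ∀ k ≤ n, E ∈ σ k → S ∈ σ (k - 1) ∨ C ∈ σ (k - 1)
  S_right : ∀ k ≤ n, S ∈ σ k → E ∈ σ (k + 1) ∨ C ∈ σ (k + 1)

lemma localConditions_sep {n : ℕ} {M : Set (ℕ × ℕ)} (hM : Valid n M) :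
    LocalConditions n (sep M) where
  zero_subset x hx := by
    rcases hx with ⟨rfl, -⟩ | ⟨-, p, hp, h⟩ | ⟨-, p, hp, h, -⟩
    · rfl
    all_goals have := hM p hp; omega
  last_subset x hx := by
    rcases hx with ⟨-, p, hp, h⟩ | ⟨rfl, -⟩ | ⟨-, p, hp, -, h⟩
    · have := hM p hp; omega
    · rfl
    · have := hM p hp; omega
  C_left k _ hC := by
    obtain ⟨p, hp, h₁, h₂⟩ := C_mem_sep_iff.1 hC
    have := hM p hp
    exact S_mem_sep_or_C_mem_sep hp (by omega) (by omega)
  C_right k _ hC := by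
    obtain ⟨p, hp, h₁, h₂⟩ := C_mem_sep_iff.1 hC
    exact E_mem_sep_or_C_mem_sep hp (by omega) h₂
  E_left k _ hE := by
    obtain ⟨p, hp, h⟩ := E_mem_sep_iff.1 hE
    have := hM p hp
    exact S_mem_sep_or_C_mem_sep hp (by omega) (by omega)
  S_right k _ hS := by
    obtain ⟨p, hp, h⟩ := S_mem_sep_iff.1 hS
    have := hM p hp
    exact E_mem_sep_or_C_mem_sep hp (by omega) (by omega)

def canonicalMentions (n : ℕ) (σ : ℕ → Set Marker) : Set (ℕ × ℕ) :=
  {p | 1 ≤ p.1 ∧ p.1 ≤ p.2 ∧ p.2 ≤ n ∧ S ∈ σ (p.1 - 1) ∧ E ∈ σ p.2 ∧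
    ∀ t ∈ Ico p.1 p.2, C ∈ σ t}

lemma valid_canonicalMentions (n : ℕ) (σ : ℕ → Set Marker) : Valid n (canonicalMentions n σ) :=
  fun _ hp => ⟨hp.1, hp.2.1, hp.2.2.1⟩

lemma mk_mem_canonicalMentions {n : ℕ} {σ : ℕ → Set Marker} {i j : ℕ} (hij : i < j) (hj : j ≤ n)
    (hS : S ∈ σ i) (hE : E ∈ σ j) (hC : ∀ t ∈ Ioo i j, C ∈ σ t) :
    (i + 1, j) ∈ canonicalMentions n σ :=
  ⟨by omega, hij, hj, hS, hE, fun t ht => hC t ⟨ht.1, ht.2⟩⟩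

lemma sep_canonicalMentions_subset (n : ℕ) (σ : ℕ → Set Marker) (k : ℕ) :
    sep (canonicalMentions n σ) k ⊆ σ k := by
  rintro x (⟨rfl, p, hp, h⟩ | ⟨rfl, p, hp, rfl⟩ | ⟨rfl, p, hp, h₁, h₂⟩)
  · simpa [h] using hp.2.2.2.1
  · exact hp.2.2.2.2.1
  · exact hp.2.2.2.2.2 k ⟨h₁, h₂⟩

namespace LocalConditions

variable {n : ℕ} {σ τ : ℕ → Set Marker}

lemma ne_zero_of_mem (h : LocalConditions n σ) {x : Marker} {k : ℕ} (hx : x ∈ σ k)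
    (hxS : x ≠ S) : k ≠ 0 := by
  rintro rfl
  exact hxS (h.zero_subset hx)

lemma ne_last_of_mem (h : LocalConditions n σ) {x : Marker} {k : ℕ} (hx : x ∈ σ k)
    (hxE : x ≠ E) : k ≠ n := by
  rintro rfl
  exact hxE (h.last_subset hx)

/-- The conditions look beyond gap `n` only from a gap carrying `C` or `S`, and gap `n` carries
neither. -/
lemma congr (h : LocalConditions n σ) (hστ : ∀ k ≤ n, σ k = τ k) : LocalConditions n τ where
  zero_subset := hστ 0 (Nat.zero_le n) ▸ h.zero_subset
  last_subset := hστ n le_rfl ▸ h.last_subset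
  C_left k hk hC := by
    rw [← hστ k hk] at hC
    rw [← hστ (k - 1) (by omega)]
    exact h.C_left k hk hC
  C_right k hk hC := by
    rw [← hστ k hk] at hC
    have hkn := h.ne_last_of_mem hC (by decide)
    rw [← hστ (k + 1) (by omega)]
    exact h.C_right k hk hC
  E_left k hk hE := by
    rw [← hστ k hk] at hE
    rw [← hστ (k - 1) (by omega)]
    exact h.E_left k hk hE
  S_right k hk hS := by
    rw [← hστ k hk] at hS
    have hkn := h.ne_last_of_mem hS (by decide)
    rw [← hστ (k + 1) (by omega)]
    exact h.S_right k hk hS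

lemma exists_S_before (h : LocalConditions n σ) {m : ℕ} (hm : m ≤ n)
    (hSC : S ∈ σ m ∨ C ∈ σ m) : ∃ i ≤ m, S ∈ σ i ∧ ∀ t ∈ Ioc i m, C ∈ σ t := by
  induction m with
  | zero =>
    refine ⟨0, le_rfl, ?_, by simp⟩
    exact hSC.resolve_right fun hC => h.ne_zero_of_mem hC (by decide) rfl
  | succ m ih =>
    rcases hSC with hS | hC
    · exact ⟨m + 1, le_rfl, hS, by simp⟩
    obtain ⟨i, hi, hS, hCs⟩ := ih (by omega) (h.C_left (m + 1) hm hC)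
    refine ⟨i, by omega, hS, fun t ht => ?_⟩
    rcases ht.2.lt_or_eq with ht' | rfl
    · exact hCs t ⟨ht.1, by omega⟩
    · exact hC

lemma exists_E_after (h : LocalConditions n σ) {m : ℕ} (hm : m ≤ n)
    (hEC : E ∈ σ m ∨ C ∈ σ m) : ∃ j, m ≤ j ∧ j ≤ n ∧ E ∈ σ j ∧ ∀ t ∈ Ico m j, C ∈ σ t := by
  induction hm using Nat.decreasingInduction with
  | self =>
    refine ⟨n, le_rfl, le_rfl, ?_, by simp⟩
    exact hEC.resolve_right fun hC => h.ne_last_of_mem hC (by decide) rfl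
  | of_succ m hm ih =>
    rcases hEC with hE | hC
    · exact ⟨m, le_rfl, hm.le, hE, by simp⟩
    obtain ⟨j, hj, hjn, hE, hCs⟩ := ih (h.C_right m hm.le hC)
    refine ⟨j, by omega, hjn, hE, fun t ht => ?_⟩
    rcases ht.1.eq_or_lt with rfl | ht'
    · exact hC
    · exact hCs t ⟨ht', ht.2⟩

lemma subset_sep_canonicalMentions (h : LocalConditions n σ) {k : ℕ} (hk : k ≤ n) :
    σ k ⊆ sep (canonicalMentions n σ) k := by
  intro x hx
  cases x with
  | S =>
    have hkn := h.ne_last_of_mem hx (by decide)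
    obtain ⟨j, hj, hjn, hE, hC⟩ := h.exists_E_after (m := k + 1) (by omega) (h.S_right k hk hx)
    exact S_mem_sep_iff.2 ⟨_, mk_mem_canonicalMentions (by omega) hjn hx hE hC, rfl⟩
  | E =>
    have hk₀ := h.ne_zero_of_mem hx (by decide)
    obtain ⟨i, hi, hS, hC⟩ := h.exists_S_before (m := k - 1) (by omega) (h.E_left k hk hx)
    have hC' : ∀ t ∈ Ioo i k, C ∈ σ t := fun t ht => hC t ⟨ht.1, Nat.le_sub_one_of_lt ht.2⟩
    exact E_mem_sep_iff.2 ⟨_, mk_mem_canonicalMentions (by omega) hk hS hx hC', rfl⟩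
  | C =>
    have hk₀ := h.ne_zero_of_mem hx (by decide)
    have hkn := h.ne_last_of_mem hx (by decide)
    obtain ⟨i, hi, hS, hCl⟩ := h.exists_S_before (m := k - 1) (by omega) (h.C_left k hk hx)
    obtain ⟨j, hj, hjn, hE, hCr⟩ := h.exists_E_after (m := k + 1) (by omega) (h.C_right k hk hx)
    have hC : ∀ t ∈ Ioo i j, C ∈ σ t := fun t ht => by
      rcases lt_trichotomy t k with htk | rfl | htk
      · exact hCl t ⟨ht.1, by omega⟩
      · exact hx
      · exact hCr t ⟨htk, ht.2⟩
    refine C_mem_sep_iff.2 ⟨_, mk_mem_canonicalMentions (by omega) hjn hS hE hC, ?_, ?_⟩ <;>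
      dsimp only <;> omega

lemma sep_canonicalMentions (h : LocalConditions n σ) {k : ℕ} (hk : k ≤ n) :
    sep (canonicalMentions n σ) k = σ k :=
  (sep_canonicalMentions_subset n σ k).antisymm (h.subset_sep_canonicalMentions hk)

end LocalConditions

theorem realizable_characterization_general (n : ℕ) (σ : ℕ → Set Marker) :
    (∃ M : Set (ℕ × ℕ), Valid n M ∧ ∀ k ≤ n, σ k = sep M k) ↔
    (σ 0 ⊆ {Marker.S} ∧ σ n ⊆ {Marker.E} ∧
      (∀ k ≤ n, Marker.C ∈ σ k →
        (Marker.S ∈ σ (k - 1) ∨ Marker.C ∈ σ (k - 1)) ∧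
        (Marker.E ∈ σ (k + 1) ∨ Marker.C ∈ σ (k + 1))) ∧
      (∀ k ≤ n, Marker.E ∈ σ k → (Marker.S ∈ σ (k - 1) ∨ Marker.C ∈ σ (k - 1))) ∧
      (∀ k ≤ n, Marker.S ∈ σ k → (Marker.E ∈ σ (k + 1) ∨ Marker.C ∈ σ (k + 1)))) := by
  constructor
  · rintro ⟨M, hM, hσ⟩
    have h := (localConditions_sep hM).congr fun k hk => (hσ k hk).symm
    exact ⟨h.zero_subset, h.last_subset, fun k hk hC => ⟨h.C_left k hk hC, h.C_right k hk hC⟩,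
      h.E_left, h.S_right⟩
  · rintro ⟨h₀, hₙ, hC, hE, hS⟩
    have h : LocalConditions n σ :=
      ⟨h₀, hₙ, fun k hk hk' => (hC k hk hk').1, fun k hk hk' => (hC k hk hk').2, hE, hS⟩
    exact ⟨canonicalMentions n σ, valid_canonicalMentions n σ,
      fun k hk => (h.sep_canonicalMentions hk).symm⟩

theorem realizable_characterization (n : ℕ) (hn : 1 ≤ n) (σ : ℕ → Set Marker) :
    (∃ M : Set (ℕ × ℕ), Valid n M ∧ ∀ k ≤ n, σ k = sep M k) ↔
    (σ 0 ⊆ {Marker.S} ∧ σ n ⊆ {Marker.E} ∧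
      (∀ k ≤ n, Marker.C ∈ σ k →
        (Marker.S ∈ σ (k - 1) ∨ Marker.C ∈ σ (k - 1)) ∧
        (Marker.E ∈ σ (k + 1) ∨ Marker.C ∈ σ (k + 1))) ∧
      (∀ k ≤ n, Marker.E ∈ σ k → (Marker.S ∈ σ (k - 1) ∨ Marker.C ∈ σ (k - 1))) ∧
      (∀ k ≤ n, Marker.S ∈ σ k → (Marker.E ∈ σ (k + 1) ∨ Marker.C ∈ σ (k + 1)))) :=
  realizable_characterization_general n σ
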